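/- arXiv:0801.1440 — 3 statements merged into one kernel-verified Lean document; each statement's English description precedes it below -/
import Mathlib

section
/- Let X = (X_v, v ∈ V) be a discrete random vector with strictly positive joint distribution, let {A, B} partition V, and suppose X_A is independent of X_B. Then for every subset M ⊆ V that intersects both A and B, the highest-order log-linear interaction parameter of the marginal distribution of X_M vanishes: λ^M_M(i_M) = Σ_{L⊆M} (-1)^{|M\L|} log p_M(i_L, i*_{M\L}) = 0 for all cells i_M. -/
/-!
Independence makes every margin factor, `p_M = p_{M ∩ A} · p_{M ∩ B}`: splitting a cell into its
`A`- and `B`-coordinates, the sum of `p_A(k) p_B(k)` over the cells agreeing with `j` on `M` is a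
sum over `A`-coordinates times a sum over `B`-coordinates, and these are the two smaller margins.
So `L ↦ log p_M(i_L, i*)` is the sum of a function blind to the coordinates in `B` and one blind to
those in `A`. The Möbius sum over `L ⊆ M` of a function that does not see whether `x ∈ L` vanishes
(pair `L` with `insert x L`), and `M` has a point in `A` and one in `B`.
-/

open Finset

/-- The marginal distribution of `p` over the margin `M`, as a function of a full cell
depending only on its `M`-coordinates. -/
noncomputable def marg {V : Type*} [Fintype V] [DecidableEq V] {b : V → ℕ}
    (p : ((v : V) → Fin (b v)) → ℝ) (M : Finset V) (i : (v : V) → Fin (b v)) : ℝ :=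
  ∑ k : (v : V) → Fin (b v), if ∀ v ∈ M, k v = i v then p k else 0

/-- The multivariate logistic parameter `η^M = λ^M_M`: the highest-order log-linear
interaction of the marginal distribution `p_M`, obtained by Möbius inversion of
`log p_M` with baseline cell `(0,...,0)`. -/
noncomputable def mlogit {V : Type*} [Fintype V] [DecidableEq V] {b : V → ℕ}
    (hb : ∀ v, 0 < b v) (p : ((v : V) → Fin (b v)) → ℝ)
    (M : Finset V) (i : (v : V) → Fin (b v)) : ℝ :=
  ∑ L ∈ M.powerset, (-1 : ℝ) ^ (M.card - L.card) *
    Real.log (marg p M (fun v => if v ∈ L then i v else ⟨0, hb v⟩))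

theorem sum_sum_eq_mul_of_eq_mul_sum {R α γ : Type*} [CommSemiring R] [Fintype α] [Fintype γ]
    (P : α → γ → R) (hP : ∀ a c, P a c = (∑ c', P a c') * ∑ a', P a' c)
    (s : Finset α) (t : Finset γ) :
    ∑ a ∈ s, ∑ c ∈ t, P a c = (∑ a ∈ s, ∑ c, P a c) * ∑ a, ∑ c ∈ t, P a c := by
  rw [Finset.sum_comm (s := univ), Finset.sum_mul_sum]
  exact sum_congr rfl fun a _ => sum_congr rfl fun c _ => hP a c

theorem sum_powerset_neg_one_pow_mul_eq_zero {α R : Type*} [DecidableEq α] [CommRing R]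
    {M : Finset α} {x : α} (hx : x ∈ M) (F : Finset α → R)
    (hF : ∀ L ⊆ M.erase x, F (insert x L) = F L) :
    ∑ L ∈ M.powerset, (-1 : R) ^ (M.card - L.card) * F L = 0 := by
  rw [← insert_erase hx, sum_powerset_insert (notMem_erase x M), ← sum_add_distrib]
  refine sum_eq_zero fun L hL => ?_
  have hLx : x ∉ L := fun h => notMem_erase x M (mem_powerset.1 hL h)
  have hcard : L.card ≤ (M.erase x).card := card_le_card (mem_powerset.1 hL)
  rw [hF L (mem_powerset.1 hL), card_insert_of_notMem (notMem_erase x M),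
    card_insert_of_notMem hLx, Nat.add_sub_add_right, Nat.sub_add_comm hcard, pow_succ]
  ring

section Marginal

variable {V : Type*} [Fintype V] [DecidableEq V] {b : V → ℕ}

theorem marg_congr (p : ((v : V) → Fin (b v)) → ℝ) (S : Finset V)
    {j j' : (v : V) → Fin (b v)} (h : ∀ v ∈ S, j v = j' v) :
    marg p S j = marg p S j' := by
  unfold marg
  refine sum_congr rfl fun k _ => if_congr ?_ rfl rfl
  exact forall₂_congr fun v hv => by rw [h v hv]

theorem marg_pos {p : ((v : V) → Fin (b v)) → ℝ} (hpos : ∀ i, 0 < p i)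
    (S : Finset V) (j : (v : V) → Fin (b v)) : 0 < marg p S j :=
  sum_pos' (fun k _ => by split <;> simp [(hpos k).le])
    ⟨j, mem_univ j, by rw [if_pos fun v _ => rfl]; exact hpos j⟩

theorem marg_eq_sum_sum (p : ((v : V) → Fin (b v)) → ℝ) (A S : Finset V)
    (j : (v : V) → Fin (b v)) :
    marg p S j =
      ∑ a ∈ univ.filter (fun a : (v : {v // v ∈ A}) → Fin (b v) => ∀ v, ↑v ∈ S → a v = j v),
        ∑ c ∈ univ.filter (fun c : (v : {v // v ∉ A}) → Fin (b v) => ∀ v, ↑v ∈ S → c v = j v),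
          p ((Equiv.piEquivPiSubtypeProd (· ∈ A) (fun v => Fin (b v))).symm (a, c)) := by
  unfold marg
  rw [← (Equiv.piEquivPiSubtypeProd (· ∈ A) (fun v => Fin (b v))).symm.sum_comp,
    Fintype.sum_prod_type]
  simp only [sum_filter]
  refine sum_congr rfl fun a _ => ?_
  have hcond : ∀ c,
      (∀ v ∈ S, (Equiv.piEquivPiSubtypeProd (· ∈ A) (fun v => Fin (b v))).symm (a, c) v = j v) ↔
      (∀ v : {v // v ∈ A}, ↑v ∈ S → a v = j v) ∧ ∀ v : {v // v ∉ A}, ↑v ∈ S → c v = j v := by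
    intro c
    refine ⟨fun h => ⟨fun v hv => by simpa [v.2] using h v hv,
      fun v hv => by simpa [v.2] using h v hv⟩, fun ⟨ha, hc⟩ v hv => ?_⟩
    by_cases hA : v ∈ A
    · simpa [hA] using ha ⟨v, hA⟩ hv
    · simpa [hA] using hc ⟨v, hA⟩ hv
  simp_rw [hcond, ite_and]
  rw [sum_ite_irrel, sum_const_zero]

theorem marg_self_symm_piEquivPiSubtypeProd (p : ((v : V) → Fin (b v)) → ℝ) (A : Finset V)
    (a : (v : {v // v ∈ A}) → Fin (b v)) (c : (v : {v // v ∉ A}) → Fin (b v)) :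
    marg p A ((Equiv.piEquivPiSubtypeProd (· ∈ A) (fun v => Fin (b v))).symm (a, c)) =
      ∑ c', p ((Equiv.piEquivPiSubtypeProd (· ∈ A) (fun v => Fin (b v))).symm (a, c')) := by
  have hfilter : univ.filter (fun a' : (v : {v // v ∈ A}) → Fin (b v) =>
      ∀ v, ↑v ∈ A →
        a' v = (Equiv.piEquivPiSubtypeProd (· ∈ A) (fun v => Fin (b v))).symm (a, c) v) =
        {a} := by
    ext a'
    simp [funext_iff]
  rw [marg_eq_sum_sum p A A, hfilter, sum_singleton,
    filter_true_of_mem fun c' _ v hv => absurd hv v.2]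

theorem marg_compl_symm_piEquivPiSubtypeProd (p : ((v : V) → Fin (b v)) → ℝ) {A B : Finset V}
    (hB : ∀ v, v ∈ B ↔ v ∉ A) (a : (v : {v // v ∈ A}) → Fin (b v))
    (c : (v : {v // v ∉ A}) → Fin (b v)) :
    marg p B ((Equiv.piEquivPiSubtypeProd (· ∈ A) (fun v => Fin (b v))).symm (a, c)) =
      ∑ a', p ((Equiv.piEquivPiSubtypeProd (· ∈ A) (fun v => Fin (b v))).symm (a', c)) := by
  have hfilter : univ.filter (fun c' : (v : {v // v ∉ A}) → Fin (b v) =>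
      ∀ v, ↑v ∈ B →
        c' v = (Equiv.piEquivPiSubtypeProd (· ∈ A) (fun v => Fin (b v))).symm (a, c) v) =
        {c} := by
    ext c'
    simp +contextual [funext_iff, hB]
  rw [marg_eq_sum_sum p A B, hfilter,
    filter_true_of_mem fun a' _ (v : {v // v ∈ A}) hv => absurd v.2 ((hB v).1 hv)]
  simp only [sum_singleton]

theorem marg_eq_marg_inter_mul_marg_inter {p : ((v : V) → Fin (b v)) → ℝ} {A B : Finset V}
    (hdisj : Disjoint A B) (hcover : A ∪ B = univ)
    (hindep : ∀ i, p i = marg p A i * marg p B i) (M : Finset V) (j : (v : V) → Fin (b v)) :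
    marg p M j = marg p (M ∩ A) j * marg p (M ∩ B) j := by
  have hB : ∀ v, v ∈ B ↔ v ∉ A := fun v =>
    ⟨fun h hA => disjoint_left.1 hdisj hA h,
      (mem_union.1 (hcover ▸ mem_univ v)).resolve_left⟩
  rw [marg_eq_sum_sum p A M, marg_eq_sum_sum p A (M ∩ A), marg_eq_sum_sum p A (M ∩ B),
    sum_sum_eq_mul_of_eq_mul_sum _ fun a c => by
      rw [hindep, marg_self_symm_piEquivPiSubtypeProd,
        marg_compl_symm_piEquivPiSubtypeProd p hB]]
  -- the `M ∩ A`-filter on `Aᶜ`-coordinates and the `M ∩ B`-filter on `A`-coordinates are trivial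
  simp +contextual [hB]

end Marginal

theorem stmt9_general {V : Type*} [Fintype V] [DecidableEq V] {b : V → ℕ} (hb : ∀ v, 0 < b v)
    (p : ((v : V) → Fin (b v)) → ℝ) (hpos : ∀ i, 0 < p i)
    (A B : Finset V) (hdisj : Disjoint A B) (hcover : A ∪ B = Finset.univ)
    (hindep : ∀ i, p i = marg p A i * marg p B i)
    (M : Finset V) (hMA : (M ∩ A).Nonempty) (hMB : (M ∩ B).Nonempty)
    (i : (v : V) → Fin (b v)) :
    mlogit hb p M i = 0 := by
  obtain ⟨x, hx⟩ := hMB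
  obtain ⟨y, hy⟩ := hMA
  obtain ⟨hxM, hxB⟩ := mem_inter.1 hx
  obtain ⟨hyM, hyA⟩ := mem_inter.1 hy
  let F (S L : Finset V) : ℝ := Real.log (marg p S fun v => if v ∈ L then i v else ⟨0, hb v⟩)
  have hmobius : ∀ S, ∀ z ∈ M, z ∉ S →
      ∑ L ∈ M.powerset, (-1 : ℝ) ^ (M.card - L.card) * F S L = 0 := fun S z hzM hzS =>
    sum_powerset_neg_one_pow_mul_eq_zero hzM _ fun L _ => congrArg Real.log <|
      marg_congr p S fun v hv => by simp [ne_of_mem_of_not_mem hv hzS]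
  calc mlogit hb p M i
      = ∑ L ∈ M.powerset, (-1 : ℝ) ^ (M.card - L.card) * F (M ∩ A) L +
          ∑ L ∈ M.powerset, (-1 : ℝ) ^ (M.card - L.card) * F (M ∩ B) L := by
        rw [mlogit, ← sum_add_distrib]
        refine sum_congr rfl fun L _ => ?_
        rw [marg_eq_marg_inter_mul_marg_inter hdisj hcover hindep,
          Real.log_mul (marg_pos hpos _ _).ne' (marg_pos hpos _ _).ne', mul_add]
    _ = 0 := by
        rw [hmobius _ x hxM fun h => disjoint_left.1 hdisj (mem_inter.1 h).2 hxB,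
          hmobius _ y hyM fun h => disjoint_left.1 hdisj hyA (mem_inter.1 h).2, add_zero]

/-- if `{A, B}` partitions `V` and `X_A ⊥ X_B`, then for every `M`
intersecting both `A` and `B` the multivariate logistic parameter `η^M = λ^M_M`
vanishes identically. -/
theorem stmt9 {V : Type*} [Fintype V] [DecidableEq V] {b : V → ℕ} (hb : ∀ v, 0 < b v)
    (p : ((v : V) → Fin (b v)) → ℝ) (hpos : ∀ i, 0 < p i) (hsum : ∑ i, p i = 1)
    (A B : Finset V) (hdisj : Disjoint A B) (hcover : A ∪ B = Finset.univ)
    (hindep : ∀ i, p i = marg p A i * marg p B i)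
    (M : Finset V) (hMA : (M ∩ A).Nonempty) (hMB : (M ∩ B).Nonempty)
    (i : (v : V) → Fin (b v)) :
    mlogit hb p M i = 0 :=
  stmt9_general hb p hpos A B hdisj hcover hindep M hMA hMB i
end

section
/- Marginalization preserves bi-directed graph models: if a strictly positive discrete distribution p on I_V satisfies the connected set Markov property for a graph G = (V,E), then for any A ⊆ V the marginal distribution p_A satisfies the connected set Markov property for the induced subgraph G_A = (A, E_A). -/
/-! A disconnected set `D ⊆ A` of `G_A` with components `C_k` is also a disconnected set of `G`
with the same components, because `G_A` carries exactly the edges of `G` inside `A`. Marginalizing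
`p_A` further to `D` is the same as marginalizing `p` to `D`, evaluated at any full cell extending
the given `A`-cell, so the factorization of `p_D` over the `C_k` is that of `(p_A)_D`. -/

open Finset

/-- The connected set Markov property for a graph `G`: for every disconnected vertex set
`D` with connected components `C 0, ..., C (r-1)` (a family of at least two nonempty,
pairwise disjoint connected sets covering `D` with no edges of `G` between distinct
members), the marginal over `D` factorizes into the product of the marginals over the
components. -/
def CSMP {V : Type*} [Fintype V] [DecidableEq V] {b : V → ℕ} (G : SimpleGraph V)
    (p : ((v : V) → Fin (b v)) → ℝ) : Prop :=
  ∀ (D : Finset V) (r : ℕ) (C : Fin r → Finset V), 2 ≤ r →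
    (∀ k, (C k).Nonempty) →
    (∀ k, (G.induce ((C k : Finset V) : Set V)).Connected) →
    (∀ j k, j ≠ k → Disjoint (C j) (C k)) →
    (∀ j k, j ≠ k → ∀ u ∈ C j, ∀ v ∈ C k, ¬ G.Adj u v) →
    D = Finset.univ.biUnion C →
    ∀ i, marg p D i = ∏ k, marg p (C k) i

noncomputable def margRestrict {V : Type*} [Fintype V] [DecidableEq V] {b : V → ℕ}
    (p : ((v : V) → Fin (b v)) → ℝ) (A : Finset V) :
    ((v : ((A : Finset V) : Set V)) → Fin (b ↑v)) → ℝ :=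
  fun j => ∑ k : (v : V) → Fin (b v),
    if ∀ v : ((A : Finset V) : Set V), k ↑v = j v then p k else 0

noncomputable def extendCell {V : Type*} [DecidableEq V] {b : V → ℕ} (hb : ∀ v, 0 < b v)
    (A : Finset V) (i : (v : ((A : Finset V) : Set V)) → Fin (b ↑v)) : (v : V) → Fin (b v) :=
  fun v => if h : v ∈ A then i ⟨v, h⟩ else ⟨0, hb v⟩

lemma marg_margRestrict {V : Type*} [Fintype V] [DecidableEq V] {b : V → ℕ}
    (hb : ∀ v, 0 < b v) (p : ((v : V) → Fin (b v)) → ℝ) (A : Finset V)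
    (D : Finset ((A : Finset V) : Set V)) (i : (v : ((A : Finset V) : Set V)) → Fin (b ↑v)) :
    marg (margRestrict p A) D i = marg p (D.image Subtype.val) (extendCell hb A i) := by
  have hcond (k : (v : V) → Fin (b v)) : (∀ v ∈ D, k v = i v) ↔
      ∀ u ∈ D.image Subtype.val, k u = extendCell hb A i u := by
    simp only [Finset.forall_mem_image, Subtype.forall]
    exact forall₂_congr fun v hv => by simp [extendCell, Finset.mem_coe.mp hv]
  have hpull (c : Prop) [Decidable c] (f : ((v : V) → Fin (b v)) → ℝ) :
      (if c then ∑ k, f k else 0) = ∑ k, if c then f k else 0 := by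
    split_ifs <;> simp
  have hrestrict (k : (v : V) → Fin (b v)) (j : (v : ((A : Finset V) : Set V)) → Fin (b ↑v)) :
      (∀ v : ((A : Finset V) : Set V), k v = j v) ↔
        (fun v : ((A : Finset V) : Set V) => k v) = j :=
    funext_iff.symm
  simp only [marg, margRestrict, ← hcond, hrestrict, hpull]
  rw [Finset.sum_comm]
  refine Finset.sum_congr rfl fun k _ => ?_
  simp only [← ite_and, and_comm]
  simp [ite_and]

lemma SimpleGraph.Connected.induce_image_val {V : Type*} {G : SimpleGraph V} {s : Set V}
    {t : Set s} (h : ((G.induce s).induce t).Connected) :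
    (G.induce (Subtype.val '' t)).Connected := by
  refine h.map ⟨fun x => ⟨x.1.1, x.1, x.2, rfl⟩, fun hxy => hxy⟩ ?_
  rintro ⟨_, x, hx, rfl⟩
  exact ⟨⟨x, hx⟩, rfl⟩

theorem stmt13_general {V : Type*} [Fintype V] [DecidableEq V] {b : V → ℕ} (hb : ∀ v, 0 < b v)
    (G : SimpleGraph V) (p : ((v : V) → Fin (b v)) → ℝ)
    (A : Finset V) (hG : CSMP G p) :
    CSMP (G.induce ((A : Finset V) : Set V))
      (fun j : (v : ((A : Finset V) : Set V)) → Fin (b ↑v) =>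
        ∑ k : (v : V) → Fin (b v),
          if ∀ v : ((A : Finset V) : Set V), k ↑v = j v then p k else 0) := by
  intro D r C hr hne hconn hdisj hnonadj hD i
  have hfactor := hG (D.image Subtype.val) r (fun k => (C k).image Subtype.val) hr
    (fun k => (hne k).image _)
    (fun k => by rw [Finset.coe_image]; exact (hconn k).induce_image_val)
    (fun j k hjk => (Finset.disjoint_image Subtype.val_injective).mpr (hdisj j k hjk))
    (fun j k hjk => by
      simp only [Finset.forall_mem_image]
      exact fun u hu v hv => hnonadj j k hjk u hu v hv)
    (by rw [hD, Finset.biUnion_image])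
    (extendCell hb A i)
  change marg (margRestrict p A) D i = ∏ k, marg (margRestrict p A) (C k) i
  simp only [marg_margRestrict hb, hfactor]

/-- if `p` satisfies the connected set Markov property for `G`, then for any
`A ⊆ V` the marginal distribution `p_A` (a distribution on the sub-product indexed by `A`)
satisfies the connected set Markov property for the induced subgraph `G_A`. -/
theorem stmt13 {V : Type*} [Fintype V] [DecidableEq V] {b : V → ℕ} (hb : ∀ v, 0 < b v)
    (G : SimpleGraph V) (p : ((v : V) → Fin (b v)) → ℝ)
    (hpos : ∀ i, 0 < p i) (hsum : ∑ i, p i = 1)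
    (A : Finset V) (hG : CSMP G p) :
    CSMP (G.induce ((A : Finset V) : Set V))
      (fun j : (v : ((A : Finset V) : Set V)) → Fin (b ↑v) =>
        ∑ k : (v : V) → Fin (b v),
          if ∀ v : ((A : Finset V) : Set V), k ↑v = j v then p k else 0) :=
  stmt13_general hb G p A hG
end

section
/- Let X_1, X_2, X_3, X_4 be discrete random variables with strictly positive joint distribution. The conjunction of the three independence statements X_1 ⊥ X_4, X_2 ⊥ X_4 | X_1, and X_1 ⊥ X_3 | X_4 is equivalent to the conjunction of the two marginal independence statements (X_1) ⊥ (X_3, X_4) and (X_1, X_2) ⊥ X_4. -/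
/-!
Marginalising `(X₁, X₂) ⊥ X₄` over `X₂` gives `X₁ ⊥ X₄`, so both sides entail `p₁₄ = p₁ p₄`.
Given that, `X₂ ⊥ X₄ | X₁` and `X₁ ⊥ X₃ | X₄` become `(X₁, X₂) ⊥ X₄` and
`X₁ ⊥ (X₃, X₄)` after cancelling the factor `p₁(a)`, resp. `p₄(d)`, which positivity makes nonzero.
-/

open Finset

section
variable {I₁ I₂ I₃ I₄ : Type*} [Fintype I₁] [Fintype I₂] [Fintype I₃] [Fintype I₄]

/-- Marginal of `X₁`. -/
noncomputable def m1 (p : I₁ → I₂ → I₃ → I₄ → ℝ) (a : I₁) : ℝ := ∑ b, ∑ c, ∑ d, p a b c d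
/-- Marginal of `X₄`. -/
noncomputable def m4 (p : I₁ → I₂ → I₃ → I₄ → ℝ) (d : I₄) : ℝ := ∑ a, ∑ b, ∑ c, p a b c d
/-- Marginal of `(X₁, X₂)`. -/
noncomputable def m12 (p : I₁ → I₂ → I₃ → I₄ → ℝ) (a : I₁) (b : I₂) : ℝ := ∑ c, ∑ d, p a b c d
/-- Marginal of `(X₃, X₄)`. -/
noncomputable def m34 (p : I₁ → I₂ → I₃ → I₄ → ℝ) (c : I₃) (d : I₄) : ℝ := ∑ a, ∑ b, p a b c d
/-- Marginal of `(X₁, X₄)`. -/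
noncomputable def m14 (p : I₁ → I₂ → I₃ → I₄ → ℝ) (a : I₁) (d : I₄) : ℝ := ∑ b, ∑ c, p a b c d
/-- Marginal of `(X₁, X₂, X₄)`. -/
noncomputable def m124 (p : I₁ → I₂ → I₃ → I₄ → ℝ) (a : I₁) (b : I₂) (d : I₄) : ℝ := ∑ c, p a b c d
/-- Marginal of `(X₁, X₃, X₄)`. -/
noncomputable def m134 (p : I₁ → I₂ → I₃ → I₄ → ℝ) (a : I₁) (c : I₃) (d : I₄) : ℝ := ∑ b, p a b c d

theorem sum_sum_sum_pos {β γ δ : Type*} [Fintype β] [Fintype γ] [Fintype δ]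
    [Nonempty β] [Nonempty γ] [Nonempty δ] {f : β → γ → δ → ℝ} (hf : ∀ b c d, 0 < f b c d) :
    0 < ∑ b, ∑ c, ∑ d, f b c d :=
  sum_pos (fun b _ => sum_pos (fun c _ => sum_pos (fun d _ => hf b c d) univ_nonempty)
    univ_nonempty) univ_nonempty

section
variable {p : I₁ → I₂ → I₃ → I₄ → ℝ}

theorem m14_eq_m1_mul_m4_of_m124_eq {a : I₁} {d : I₄}
    (h : ∀ b, m124 p a b d = m12 p a b * m4 p d) : m14 p a d = m1 p a * m4 p d :=
  calc m14 p a d = ∑ b, m124 p a b d := rfl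
    _ = ∑ b, m12 p a b * m4 p d := sum_congr rfl fun b _ => h b
    _ = m1 p a * m4 p d := (sum_mul ..).symm

theorem m124_mul_m1_eq_iff [Nonempty I₂] [Nonempty I₃] [Nonempty I₄]
    (hpos : ∀ a b c d, 0 < p a b c d) {a : I₁} {b : I₂} {d : I₄}
    (h14 : m14 p a d = m1 p a * m4 p d) :
    m124 p a b d * m1 p a = m12 p a b * m14 p a d ↔ m124 p a b d = m12 p a b * m4 p d := by
  rw [h14, mul_left_comm, mul_comm (m1 p a)]
  exact mul_left_inj' (sum_sum_sum_pos (hpos a)).ne'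

theorem m134_mul_m4_eq_iff [Nonempty I₁] [Nonempty I₂] [Nonempty I₃]
    (hpos : ∀ a b c d, 0 < p a b c d) {a : I₁} {c : I₃} {d : I₄}
    (h14 : m14 p a d = m1 p a * m4 p d) :
    m134 p a c d * m4 p d = m14 p a d * m34 p c d ↔ m134 p a c d = m1 p a * m34 p c d := by
  rw [h14, mul_right_comm (m1 p a)]
  exact mul_left_inj' (sum_sum_sum_pos (hpos · · · d)).ne'

end

/-- for a strictly positive joint distribution of `X₁, X₂, X₃, X₄`, the
conjunction `X₁ ⊥ X₄`, `X₂ ⊥ X₄ | X₁`, `X₁ ⊥ X₃ | X₄` is equivalent to the conjunction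
`X₁ ⊥ (X₃, X₄)`, `(X₁, X₂) ⊥ X₄`. -/
theorem stmt17 (p : I₁ → I₂ → I₃ → I₄ → ℝ)
    (hpos : ∀ a b c d, 0 < p a b c d)
    (hsum : ∑ a, ∑ b, ∑ c, ∑ d, p a b c d = 1) :
    ((∀ a d, m14 p a d = m1 p a * m4 p d) ∧
     (∀ a b d, m124 p a b d * m1 p a = m12 p a b * m14 p a d) ∧
     (∀ a c d, m134 p a c d * m4 p d = m14 p a d * m34 p c d)) ↔
    ((∀ a c d, m134 p a c d = m1 p a * m34 p c d) ∧
     (∀ a b d, m124 p a b d = m12 p a b * m4 p d)) := by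
  obtain ⟨a, -, h⟩ := exists_ne_zero_of_sum_ne_zero (hsum.trans_ne one_ne_zero)
  obtain ⟨b, -, h⟩ := exists_ne_zero_of_sum_ne_zero h
  obtain ⟨c, -, h⟩ := exists_ne_zero_of_sum_ne_zero h
  obtain ⟨d, -, -⟩ := exists_ne_zero_of_sum_ne_zero h
  have : Nonempty I₁ := ⟨a⟩
  have : Nonempty I₂ := ⟨b⟩
  have : Nonempty I₃ := ⟨c⟩
  have : Nonempty I₄ := ⟨d⟩
  constructor
  · rintro ⟨h14, h124, h134⟩
    exact ⟨fun a c d => (m134_mul_m4_eq_iff hpos (h14 a d)).1 (h134 a c d),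
      fun a b d => (m124_mul_m1_eq_iff hpos (h14 a d)).1 (h124 a b d)⟩
  · rintro ⟨h134, h124⟩
    have h14 a d : m14 p a d = m1 p a * m4 p d := m14_eq_m1_mul_m4_of_m124_eq (h124 a · d)
    exact ⟨h14, fun a b d => (m124_mul_m1_eq_iff hpos (h14 a d)).2 (h124 a b d),
      fun a c d => (m134_mul_m4_eq_iff hpos (h14 a d)).2 (h134 a c d)⟩

end
end
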